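/- Let G be a properly edge-coloured bipartite multigraph with n colours such that each colour class is a matching of size at least n + 7 n^{3/4}, where n is sufficiently large. Assume (as a black box) that every n-edge-coloured bipartite multigraph whose colour classes are matchings of size at least n contains a rainbow matching of size at least n - \sqrt{n}. Then G contains a full rainbow matching, i.e., a rainbow matching using every one of the n colours. -/

import Mathlib

open Finset
open scoped Classical

section Defs

variable {V C E : Type*}

/-- The two endpoints of an edge of a multigraph given by endpoint functions `e₁ e₂`. -/
def edgeEnds [DecidableEq V] (e₁ e₂ : E → V) (e : E) : Finset V := {e₁ e, e₂ e}

/-- A finite set of edges is a matching: all edges are non-loops and pairwise vertex-disjoint. -/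
def IsMatchingE [DecidableEq V] (e₁ e₂ : E → V) (M : Finset E) : Prop :=
  (∀ e ∈ M, e₁ e ≠ e₂ e) ∧
  ∀ a ∈ M, ∀ b ∈ M, a ≠ b → Disjoint (edgeEnds e₁ e₂ a) (edgeEnds e₁ e₂ b)

/-- A set of edges is rainbow: all its edges have pairwise distinct colours. -/
def IsRainbow (col : E → C) (M : Finset E) : Prop := Set.InjOn col ↑M

/-- The colour class of colour `c`: the set of all edges of colour `c`. -/
noncomputable def colourClass [Fintype E] (col : E → C) (c : C) : Finset E :=
  Finset.univ.filter fun e => col e = c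

/-- The set of vertices covered by a set of edges `M`. -/
def matchedVerts [DecidableEq V] (e₁ e₂ : E → V) (M : Finset E) : Finset V :=
  M.biUnion (edgeEnds e₁ e₂)

/-- The set of vertices spanned by the colour class of `c`
(i.e. incident to at least one edge of colour `c`). -/
noncomputable def spannedVerts [Fintype V] [DecidableEq V] [Fintype E]
    (e₁ e₂ : E → V) (col : E → C) (c : C) : Finset V :=
  Finset.univ.filter fun v => ∃ e, col e = c ∧ (e₁ e = v ∨ e₂ e = v)

/-- `u` and `v` are distinct vertices joined by an edge of colour `c`. -/
def adjOfColour (e₁ e₂ : E → V) (col : E → C) (c : C) (u v : V) : Prop :=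
  u ≠ v ∧ ∃ e, col e = c ∧ ((e₁ e = u ∧ e₂ e = v) ∨ (e₁ e = v ∧ e₂ e = u))

/-- The colour class of `c` is a vertex-disjoint union of (non-trivial) cliques:
whenever `uv` and `vw` are edges of colour `c` with `u ≠ w`, also `uw` is an
edge of colour `c`. -/
def IsCliqueUnion (e₁ e₂ : E → V) (col : E → C) (c : C) : Prop :=
  ∀ u v w, adjOfColour e₁ e₂ col c u v → adjOfColour e₁ e₂ col c v w → u ≠ w →
    adjOfColour e₁ e₂ col c u w

end Defs

/-!
Trim every colour class to exactly `N = n + ⌈7 n^{3/4}⌉` edges and put each vertex into a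
reserve independently with probability `q = 2 n^{-1/4}`. Since a colour class is a matching, the
edge events of one colour are independent, so exponential moments give Chernoff bounds, and a
union bound over the colours yields a labelling for which every colour keeps at least `n` edges
avoiding the reserve and at least `2⌈√n⌉` edges inside it. The black box, applied to the edges
avoiding the reserve, gives a rainbow matching missing at most `√n` colours. The missing colours
are then added greedily from reserve edges: the fewer than `|R|` edges chosen so far cover fewer
than `2|R| - 1` vertices, and each vertex blocks at most one edge of a matching.
-/

lemma mem_colourClass {E C : Type*} [Fintype E] {col : E → C} {c : C} {e : E} :
    e ∈ colourClass col c ↔ col e = c := by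
  simp [colourClass]

namespace IsMatchingE

variable {V E : Type*} [DecidableEq V] {e₁ e₂ : E → V} {M P : Finset E}

lemma mono (hM : IsMatchingE e₁ e₂ M) (hPM : P ⊆ M) : IsMatchingE e₁ e₂ P :=
  ⟨fun e he => hM.1 e (hPM he), fun a ha b hb hab => hM.2 a (hPM ha) b (hPM hb) hab⟩

lemma union (hM : IsMatchingE e₁ e₂ M) (hP : IsMatchingE e₁ e₂ P)
    (hMP : Disjoint (matchedVerts e₁ e₂ M) (matchedVerts e₁ e₂ P)) :
    IsMatchingE e₁ e₂ (M ∪ P) := by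
  have cross : ∀ a ∈ M, ∀ b ∈ P, Disjoint (edgeEnds e₁ e₂ a) (edgeEnds e₁ e₂ b) :=
    fun a ha b hb => hMP.mono (subset_biUnion_of_mem _ ha) (subset_biUnion_of_mem _ hb)
  refine ⟨fun e he => (mem_union.mp he).elim (hM.1 e) (hP.1 e), fun a ha b hb hab => ?_⟩
  rcases mem_union.mp ha with ha | ha <;> rcases mem_union.mp hb with hb | hb
  · exact hM.2 a ha b hb hab
  · exact cross a ha b hb
  · exact (cross b hb a ha).symm
  · exact hP.2 a ha b hb hab

lemma insert (hM : IsMatchingE e₁ e₂ M) {e : E} (he : e₁ e ≠ e₂ e)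
    (heM : Disjoint (edgeEnds e₁ e₂ e) (matchedVerts e₁ e₂ M)) :
    IsMatchingE e₁ e₂ (insert e M) := by
  rw [← singleton_union]
  refine union ⟨by simpa using he, by simp⟩ hM ?_
  simpa [matchedVerts] using heM

lemma card_filter_not_disjoint_le (hM : IsMatchingE e₁ e₂ M) (U : Finset V) :
    #{e ∈ M | ¬ Disjoint (edgeEnds e₁ e₂ e) U} ≤ #U := by
  calc #{e ∈ M | ¬ Disjoint (edgeEnds e₁ e₂ e) U}
      ≤ #(U.biUnion fun v => {e ∈ M | v ∈ edgeEnds e₁ e₂ e}) := by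
        refine card_le_card fun e he => ?_
        obtain ⟨heM, hU⟩ := mem_filter.mp he
        obtain ⟨v, hve, hvU⟩ := not_disjoint_iff.mp hU
        exact mem_biUnion.mpr ⟨v, hvU, mem_filter.mpr ⟨heM, hve⟩⟩
    _ ≤ ∑ v ∈ U, #{e ∈ M | v ∈ edgeEnds e₁ e₂ e} := card_biUnion_le
    _ ≤ ∑ _v ∈ U, 1 := by
        refine sum_le_sum fun v _ => card_le_one.mpr fun a ha b hb => ?_
        simp only [mem_filter] at ha hb
        by_contra hab
        exact disjoint_left.mp (hM.2 a ha.1 b hb.1 hab) ha.2 hb.2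
    _ = #U := by simp

end IsMatchingE

lemma card_matchedVerts_le {V E : Type*} [DecidableEq V] (e₁ e₂ : E → V) (M : Finset E) :
    #(matchedVerts e₁ e₂ M) ≤ 2 * #M := by
  calc #(matchedVerts e₁ e₂ M) ≤ ∑ e ∈ M, #(edgeEnds e₁ e₂ e) := card_biUnion_le
    _ ≤ ∑ _e ∈ M, 2 := sum_le_sum fun e _ => card_le_two
    _ = 2 * #M := by rw [sum_const, smul_eq_mul, mul_comm]

lemma IsRainbow.union {E C : Type*} [DecidableEq C] {col : E → C} {M P : Finset E}
    (hM : IsRainbow col M) (hP : IsRainbow col P) (hMP : Disjoint (M.image col) (P.image col)) :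
    IsRainbow col (M ∪ P) := by
  have hcross : ∀ a ∈ M, ∀ b ∈ P, col a ≠ col b := fun a ha b hb hab =>
    disjoint_left.mp hMP (mem_image_of_mem col ha) (hab ▸ mem_image_of_mem col hb)
  have hdisj : Disjoint M P := disjoint_left.mpr fun a ha haP => hcross a ha a haP rfl
  rw [IsRainbow, coe_union, Set.injOn_union (disjoint_coe.mpr hdisj)]
  exact ⟨hM, hP, hcross⟩

lemma disjoint_matchedVerts_of_labels {V E β : Type*} [DecidableEq V] {e₁ e₂ : E → V}
    {M P : Finset E} {g : V → β} {b b' : β} (hbb' : b ≠ b')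
    (hM : ∀ e ∈ M, g (e₁ e) = b ∧ g (e₂ e) = b) (hP : ∀ e ∈ P, g (e₁ e) = b' ∧ g (e₂ e) = b') :
    Disjoint (matchedVerts e₁ e₂ M) (matchedVerts e₁ e₂ P) := by
  have label : ∀ {N : Finset E} {b : β}, (∀ e ∈ N, g (e₁ e) = b ∧ g (e₂ e) = b) →
      ∀ v ∈ matchedVerts e₁ e₂ N, g v = b := by
    intro N b hN v hv
    obtain ⟨e, he, hv⟩ := mem_biUnion.mp hv
    rcases mem_insert.mp hv with rfl | hv
    · exact (hN e he).1
    · rw [mem_singleton.mp hv]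
      exact (hN e he).2
  exact disjoint_left.mpr fun v hvM hvP => hbb' ((label hM v hvM).symm.trans (label hP v hvP))

lemma exists_rainbow_matching_of_two_mul_card_le {V E C : Type*} [DecidableEq V] [DecidableEq C]
    (e₁ e₂ : E → V) (col : E → C) (R : Finset C) (T : C → Finset E)
    (hT : ∀ c ∈ R, IsMatchingE e₁ e₂ (T c)) (hTcol : ∀ c ∈ R, ∀ e ∈ T c, col e = c)
    (hTcard : ∀ c ∈ R, 2 * #R ≤ #(T c) + 1) :
    ∃ P ⊆ R.biUnion T, IsMatchingE e₁ e₂ P ∧ IsRainbow col P ∧ P.image col = R := by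
  induction R using Finset.induction_on with
  | empty => exact ⟨∅, empty_subset _, ⟨by simp, by simp⟩, by simp [IsRainbow], by simp⟩
  | @insert c R hcR ih =>
    obtain ⟨P, hPT, hP, hPcol, hPR⟩ := ih (fun c' hc' => hT c' (mem_insert_of_mem hc'))
      (fun c' hc' => hTcol c' (mem_insert_of_mem hc'))
      (fun c' hc' => by
        have := hTcard c' (mem_insert_of_mem hc')
        rw [card_insert_of_notMem hcR] at this
        omega)
    have hPcard : #P = #R := by rw [← hPR, card_image_of_injOn hPcol]
    -- Each vertex covered by `P` blocks at most one edge of the matching `T c`.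
    have hblocked : #{e ∈ T c | ¬ Disjoint (edgeEnds e₁ e₂ e) (matchedVerts e₁ e₂ P)} < #(T c) := by
      have h1 := (hT c (mem_insert_self c R)).card_filter_not_disjoint_le (matchedVerts e₁ e₂ P)
      have h2 := card_matchedVerts_le e₁ e₂ P
      have h3 := hTcard c (mem_insert_self c R)
      rw [card_insert_of_notMem hcR] at h3
      omega
    obtain ⟨e, heT, hefree⟩ : ∃ e ∈ T c, Disjoint (edgeEnds e₁ e₂ e) (matchedVerts e₁ e₂ P) := by
      by_contra! h
      exact hblocked.not_ge (card_le_card fun e he => mem_filter.mpr ⟨he, h e he⟩)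
    have hec : col e = c := hTcol c (mem_insert_self c R) e heT
    have heP : col e ∉ P.image col := hPR ▸ hec ▸ hcR
    refine ⟨insert e P, ?_, hP.insert ((hT c (mem_insert_self c R)).1 e heT) hefree, ?_, ?_⟩
    · rw [biUnion_insert]
      exact insert_subset (mem_union_left _ heT) (hPT.trans subset_union_right)
    · rw [← singleton_union]
      exact IsRainbow.union (by simp [IsRainbow]) hPcol (by simpa using heP)
    · rw [image_insert, hPR, hec]

section Embedding

variable {V E E' C : Type*} [DecidableEq V] {e₁ e₂ : E → V} {M : Finset E'}

lemma isMatchingE_map (ι : E' ↪ E) :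
    IsMatchingE e₁ e₂ (M.map ι) ↔ IsMatchingE (e₁ ∘ ι) (e₂ ∘ ι) M := by
  simp only [IsMatchingE, forall_mem_map, ι.injective.ne_iff]
  rfl

lemma IsRainbow.map {col : E → C} (ι : E' ↪ E) (hM : IsRainbow (col ∘ ι) M) :
    IsRainbow col (M.map ι) := by
  rintro _ hx _ hy hxy
  obtain ⟨a, ha, rfl⟩ := mem_map.mp hx
  obtain ⟨b, hb, rfl⟩ := mem_map.mp hy
  rw [hM (mem_coe.mpr ha) (mem_coe.mpr hb) hxy]

end Embedding

/-- Proposition 11 of the paper (Barát–Gyárfás–Sárközy). -/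
def AlmostFullRainbowMatchings : Prop :=
  ∀ (m : ℕ) (V' E' : Type) [Fintype V'] [DecidableEq V'] [Fintype E'],
    ∀ (f₁ f₂ : E' → V') (col' : E' → Fin m) (part' : V' → Bool),
      (∀ e : E', part' (f₁ e) ≠ part' (f₂ e)) →
      (∀ c : Fin m, IsMatchingE f₁ f₂ (colourClass col' c) ∧
        m ≤ (colourClass col' c).card) →
      ∃ M : Finset E', IsMatchingE f₁ f₂ M ∧ IsRainbow col' M ∧
        (m : ℝ) - Real.sqrt m ≤ M.card

lemma AlmostFullRainbowMatchings.exists_subset (bb : AlmostFullRainbowMatchings) {m : ℕ}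
    {V E : Type} [Fintype V] [DecidableEq V] {e₁ e₂ : E → V} {col : E → Fin m} {part : V → Bool}
    (hpart : ∀ e, part (e₁ e) ≠ part (e₂ e)) (F : Fin m → Finset E)
    (hFcol : ∀ c, ∀ e ∈ F c, col e = c) (hF : ∀ c, IsMatchingE e₁ e₂ (F c) ∧ m ≤ #(F c)) :
    ∃ M ⊆ univ.biUnion F, IsMatchingE e₁ e₂ M ∧ IsRainbow col M ∧ (m : ℝ) - √m ≤ #M := by
  let ι : univ.biUnion F ↪ E := Function.Embedding.subtype _
  have hclass : ∀ c, (colourClass (col ∘ ι) c).map ι = F c := by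
    intro c
    ext e
    simp only [colourClass, mem_map, mem_filter, mem_univ, true_and, Function.comp_apply]
    constructor
    · rintro ⟨⟨e, he⟩, hec, rfl⟩
      obtain ⟨c', -, hc'⟩ := mem_biUnion.mp he
      rwa [← hec, Function.Embedding.coe_subtype, hFcol c' e hc']
    · intro he
      exact ⟨⟨e, mem_biUnion.mpr ⟨c, mem_univ c, he⟩⟩, hFcol c e he, rfl⟩
  obtain ⟨M, hM, hMcol, hMcard⟩ := bb m V _ (e₁ ∘ ι) (e₂ ∘ ι) (col ∘ ι) part (fun e => hpart e)
    fun c => ⟨(isMatchingE_map ι).mp ((hclass c).symm ▸ (hF c).1),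
      by rw [← card_map ι, hclass c]; exact (hF c).2⟩
  refine ⟨M.map ι, fun e heM => ?_, (isMatchingE_map ι).mpr hM, hMcol.map ι, by rwa [card_map]⟩
  obtain ⟨⟨e, he⟩, -, rfl⟩ := mem_map.mp heM
  exact he

section WeightedCube

variable {V : Type*} [Fintype V] (μ : Bool → ℝ)

/-- The probability of the labelling `g` when the labels are independent with law `μ`. -/
def cubeWeight (g : V → Bool) : ℝ := ∏ v, μ (g v)

lemma cubeWeight_nonneg (hμ0 : ∀ b, 0 ≤ μ b) (g : V → Bool) : 0 ≤ cubeWeight μ g :=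
  prod_nonneg fun v _ => hμ0 (g v)

variable [DecidableEq V]

lemma sum_cubeWeight (hμ : μ true + μ false = 1) : ∑ g : V → Bool, cubeWeight μ g = 1 := by
  simp only [cubeWeight, ← Fintype.prod_sum (fun (_ : V) b => μ b), Fintype.sum_bool, hμ,
    prod_const_one]

lemma sum_cubeWeight_mul_eq_sum_funSplitAt (v : V) (G : (V → Bool) → ℝ) :
    ∑ g, cubeWeight μ g * G g = ∑ c, μ c * ∑ r : {w // w ≠ v} → Bool,
      cubeWeight μ r * G ((Equiv.funSplitAt v Bool).symm (c, r)) := by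
  rw [← (Equiv.funSplitAt v Bool).symm.sum_comp, Fintype.sum_prod_type]
  refine sum_congr rfl fun c _ => ?_
  rw [mul_sum]
  refine sum_congr rfl fun r _ => ?_
  have hv : (Equiv.funSplitAt v Bool).symm (c, r) v = c := by simp
  have hw : ∀ w : {w // w ≠ v}, (Equiv.funSplitAt v Bool).symm (c, r) w = r w := fun w => by
    simp [w.2]
  rw [cubeWeight, Fintype.prod_eq_mul_prod_subtype_ne _ v, hv, cubeWeight]
  simp only [hw, mul_assoc]

lemma sum_cubeWeight_mul_apply (hμ : μ true + μ false = 1) (v : V)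
    (F : Bool → (V → Bool) → ℝ) (hF : ∀ b g c, F b (Function.update g v c) = F b g) :
    ∑ g, cubeWeight μ g * F (g v) g = ∑ b, μ b * ∑ g, cubeWeight μ g * F b g := by
  have hupdate : ∀ b c r, F b ((Equiv.funSplitAt v Bool).symm (c, r))
      = F b ((Equiv.funSplitAt v Bool).symm (b, r)) := by
    intro b c r
    convert hF b ((Equiv.funSplitAt v Bool).symm (b, r)) c using 2
    ext w
    by_cases hw : w = v
    · subst hw; simp
    · simp [hw]
  have hv : ∀ c r, (Equiv.funSplitAt v Bool).symm (c, r) v = c := by simp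
  rw [sum_cubeWeight_mul_eq_sum_funSplitAt μ v (fun g => F (g v) g)]
  simp_rw [sum_cubeWeight_mul_eq_sum_funSplitAt μ v (F _), hupdate, hv, ← sum_mul,
    Fintype.sum_bool μ, hμ, one_mul]

lemma sum_cubeWeight_mul_prod_of_isMatchingE {E : Type*} (hμ : μ true + μ false = 1)
    {e₁ e₂ : E → V} {M : Finset E} (hM : IsMatchingE e₁ e₂ M) (φ : Bool → Bool → ℝ) :
    ∑ g : V → Bool, cubeWeight μ g * ∏ e ∈ M, φ (g (e₁ e)) (g (e₂ e))
      = (∑ x, ∑ y, μ x * μ y * φ x y) ^ #M := by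
  induction M using Finset.cons_induction with
  | empty => simpa using sum_cubeWeight μ hμ
  | cons a M haM ih =>
    set P : (V → Bool) → ℝ := fun g => ∏ e ∈ M, φ (g (e₁ e)) (g (e₂ e))
    have hP : ∀ u ∈ edgeEnds e₁ e₂ a, ∀ g c, P (Function.update g u c) = P g := by
      intro u hu g c
      refine prod_congr rfl fun e he => ?_
      have hdisj := hM.2 a (mem_cons_self a M) e (mem_cons_of_mem he)
        (ne_of_mem_of_not_mem he haM).symm
      have h₁ : e₁ e ≠ u := fun h => disjoint_left.mp hdisj hu (by simp [edgeEnds, h])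
      have h₂ : e₂ e ≠ u := fun h => disjoint_left.mp hdisj hu (by simp [edgeEnds, h])
      rw [Function.update_of_ne h₁, Function.update_of_ne h₂]
    have hloop : e₁ a ≠ e₂ a := hM.1 a (mem_cons_self a M)
    calc ∑ g, cubeWeight μ g * ∏ e ∈ cons a M haM, φ (g (e₁ e)) (g (e₂ e))
        = ∑ g, cubeWeight μ g * (φ (g (e₁ a)) (g (e₂ a)) * P g) := by simp only [prod_cons, P]
      _ = ∑ x, μ x * ∑ g, cubeWeight μ g * (φ x (g (e₂ a)) * P g) :=
          sum_cubeWeight_mul_apply μ hμ (e₁ a) (fun x g => φ x (g (e₂ a)) * P g) fun x g c => by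
            simp only [Function.update_of_ne hloop.symm, hP (e₁ a) (by simp [edgeEnds])]
      _ = ∑ x, μ x * ∑ y, μ y * ∑ g, cubeWeight μ g * (φ x y * P g) := by
          refine sum_congr rfl fun x _ => congrArg (μ x * ·) ?_
          exact sum_cubeWeight_mul_apply μ hμ (e₂ a) (fun y g => φ x y * P g) fun y g c => by
            rw [hP (e₂ a) (by simp [edgeEnds])]
      _ = (∑ x, ∑ y, μ x * μ y * φ x y) ^ #(cons a M haM) := by
          have hrest : ∀ x y, ∑ g, cubeWeight μ g * (φ x y * P g)
              = φ x y * (∑ x, ∑ y, μ x * μ y * φ x y) ^ #M := fun x y => by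
            rw [← ih (hM.mono (subset_cons haM)), mul_sum]
            exact sum_congr rfl fun g _ => mul_left_comm _ _ _
          simp only [hrest, card_cons, pow_succ, Fintype.sum_bool]
          ring

end WeightedCube

section Tails

variable {V E : Type*} [Fintype V] [DecidableEq V] (μ : Bool → ℝ)

lemma sum_cubeWeight_le_div (hμ0 : ∀ b, 0 ≤ μ b) (s : Finset (V → Bool))
    (Y : (V → Bool) → ℝ) {a : ℝ} (ha : 0 < a) (hY : ∀ g, 0 ≤ Y g) (hsY : ∀ g ∈ s, a ≤ Y g) :
    ∑ g ∈ s, cubeWeight μ g ≤ (∑ g, cubeWeight μ g * Y g) / a := by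
  rw [le_div_iff₀ ha, sum_mul]
  calc ∑ g ∈ s, cubeWeight μ g * a ≤ ∑ g ∈ s, cubeWeight μ g * Y g :=
        sum_le_sum fun g hg => mul_le_mul_of_nonneg_left (hsY g hg) (cubeWeight_nonneg μ hμ0 g)
    _ ≤ ∑ g, cubeWeight μ g * Y g := sum_le_sum_of_subset_of_nonneg (subset_univ s)
        fun g _ _ => mul_nonneg (cubeWeight_nonneg μ hμ0 g) (hY g)

lemma exists_forall_notMem_of_sum_lt_one {ι : Type*} [Fintype ι] (hμ0 : ∀ b, 0 ≤ μ b)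
    (hμ : μ true + μ false = 1) (B : ι → Finset (V → Bool))
    (hB : ∑ i, ∑ g ∈ B i, cubeWeight μ g < 1) : ∃ g, ∀ i, g ∉ B i := by
  by_contra! hcover
  refine hB.not_ge ?_
  calc 1 = ∑ g, cubeWeight μ g := (sum_cubeWeight μ hμ).symm
    _ ≤ ∑ g, ∑ i, if g ∈ B i then cubeWeight μ g else 0 := sum_le_sum fun g _ => by
        obtain ⟨i, hi⟩ := hcover g
        refine le_trans (by simp [hi]) (single_le_sum (f := fun i => if g ∈ B i then _ else 0)
          (fun j _ => ?_) (mem_univ i))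
        split_ifs
        exacts [cubeWeight_nonneg μ hμ0 g, le_rfl]
    _ = ∑ i, ∑ g ∈ B i, cubeWeight μ g := by
        rw [sum_comm]
        simp only [sum_ite_mem, univ_inter]

lemma sum_cubeWeight_mul_pow_card_filter (hμ : μ true + μ false = 1) {e₁ e₂ : E → V}
    {M : Finset E} (hM : IsMatchingE e₁ e₂ M) (p : Bool → Bool → Prop) [DecidableRel p] (l : ℝ) :
    ∑ g, cubeWeight μ g * l ^ #{e ∈ M | p (g (e₁ e)) (g (e₂ e))}
      = (∑ x, ∑ y, μ x * μ y * if p x y then l else 1) ^ #M := by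
  rw [← sum_cubeWeight_mul_prod_of_isMatchingE μ hμ hM]
  refine sum_congr rfl fun g _ => ?_
  rw [prod_ite, prod_const_one, mul_one, prod_const]

lemma sum_cubeWeight_le_card_filter_or_le_exp (hμ0 : ∀ b, 0 ≤ μ b) (hμ : μ true + μ false = 1)
    {e₁ e₂ : E → V} {M : Finset E} (hM : IsMatchingE e₁ e₂ M) (k : ℕ) :
    ∑ g with k ≤ #{e ∈ M | g (e₁ e) = true ∨ g (e₂ e) = true}, cubeWeight μ g
      ≤ Real.exp (2 * μ true * #M - k * Real.log 2) := by
  have hfactor : ∑ x, ∑ y, μ x * μ y * (if x = true ∨ y = true then (2 : ℝ) else 1)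
      = 2 * μ true - μ true ^ 2 + 1 := by
    simp only [Fintype.sum_bool]
    rw [eq_sub_of_add_eq' hμ]
    norm_num
    ring
  refine (sum_cubeWeight_le_div μ hμ0 _ (fun g => 2 ^ #{e ∈ M | g (e₁ e) = true ∨ g (e₂ e) = true})
    (pow_pos two_pos k) (fun g => by positivity)
    fun g hg => pow_le_pow_right₀ one_le_two (mem_filter.mp hg).2).trans ?_
  have hexp : Real.exp (2 * μ true * #M - k * Real.log 2) = Real.exp (2 * μ true) ^ #M / 2 ^ k := by
    rw [Real.exp_sub, mul_comm, Real.exp_nat_mul, Real.exp_nat_mul, Real.exp_log two_pos]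
  rw [sum_cubeWeight_mul_pow_card_filter μ hμ hM (fun x y => x = true ∨ y = true), hfactor, hexp]
  have hp : μ true ≤ 1 := by linarith [hμ0 false]
  gcongr
  · nlinarith [hμ0 true]
  · linarith [Real.add_one_le_exp (2 * μ true - μ true ^ 2), Real.exp_le_exp.mpr
      (show 2 * μ true - μ true ^ 2 ≤ 2 * μ true by nlinarith)]

lemma sum_cubeWeight_card_filter_and_lt_le_exp (hμ0 : ∀ b, 0 ≤ μ b) (hμ : μ true + μ false = 1)
    {e₁ e₂ : E → V} {M : Finset E} (hM : IsMatchingE e₁ e₂ M) (k : ℕ) :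
    ∑ g with #{e ∈ M | g (e₁ e) = true ∧ g (e₂ e) = true} < k, cubeWeight μ g
      ≤ Real.exp (k * Real.log 2 - μ true ^ 2 / 2 * #M) := by
  have hfactor : ∑ x, ∑ y, μ x * μ y * (if x = true ∧ y = true then (2⁻¹ : ℝ) else 1)
      = 1 - μ true ^ 2 / 2 := by
    simp only [Fintype.sum_bool]
    rw [eq_sub_of_add_eq' hμ]
    norm_num
    ring
  refine (sum_cubeWeight_le_div μ hμ0 _
    (fun g => 2⁻¹ ^ #{e ∈ M | g (e₁ e) = true ∧ g (e₂ e) = true}) (pow_pos (by norm_num) k)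
    (fun g => by positivity)
    fun g hg => pow_le_pow_of_le_one (by norm_num) (by norm_num) (mem_filter.mp hg).2.le).trans ?_
  have hexp : Real.exp (k * Real.log 2 - μ true ^ 2 / 2 * #M)
      = Real.exp (-(μ true ^ 2 / 2)) ^ #M * 2 ^ k := by
    rw [sub_eq_neg_add, Real.exp_add, ← neg_mul, mul_comm _ (#M : ℝ),
      Real.exp_nat_mul, Real.exp_nat_mul, Real.exp_log two_pos]
  rw [sum_cubeWeight_mul_pow_card_filter μ hμ hM (fun x y => x = true ∧ y = true), hfactor, hexp,
    inv_pow, div_inv_eq_mul]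
  have hp : μ true ≤ 1 := by linarith [hμ0 false]
  gcongr
  · nlinarith [hμ0 true]
  · linarith [Real.add_one_le_exp (-(μ true ^ 2 / 2))]

end Tails

lemma exists_labelling_of_exp_lt {V E ι : Type*} [Fintype V] [DecidableEq V] [Fintype ι]
    {e₁ e₂ : E → V} (K : ι → Finset E) (hK : ∀ c, IsMatchingE e₁ e₂ (K c)) {m S k : ℕ}
    (hKcard : ∀ c, #(K c) = m + S) {q : ℝ} (hq0 : 0 ≤ q) (hq1 : q ≤ 1)
    (hexp : Fintype.card ι * (Real.exp (2 * q * (m + S) - (S + 1) * Real.log 2)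
      + Real.exp (k * Real.log 2 - q ^ 2 / 2 * (m + S))) < 1) :
    ∃ g : V → Bool, ∀ c, m ≤ #{e ∈ K c | g (e₁ e) = false ∧ g (e₂ e) = false} ∧
      k ≤ #{e ∈ K c | g (e₁ e) = true ∧ g (e₂ e) = true} := by
  set μ : Bool → ℝ := fun b => if b then q else 1 - q
  have hμ0 : ∀ b, 0 ≤ μ b := by simp [μ, hq0, hq1]
  have hμ : μ true + μ false = 1 := by simp [μ]
  obtain ⟨g, hg⟩ := exists_forall_notMem_of_sum_lt_one μ hμ0 hμ
    (Sum.elim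
      (fun c => univ.filter fun g => S + 1 ≤ #{e ∈ K c | g (e₁ e) = true ∨ g (e₂ e) = true})
      (fun c => univ.filter fun g => #{e ∈ K c | g (e₁ e) = true ∧ g (e₂ e) = true} < k)) <| by
    rw [Fintype.sum_sum_type]
    refine lt_of_le_of_lt ?_ hexp
    rw [mul_add, ← nsmul_eq_mul, ← nsmul_eq_mul, ← card_univ, ← sum_const, ← sum_const]
    refine add_le_add (sum_le_sum fun c _ => ?_) (sum_le_sum fun c _ => ?_)
    · have h := sum_cubeWeight_le_card_filter_or_le_exp μ hμ0 hμ (hK c) (S + 1)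
      simp only [μ, hKcard c, Nat.cast_add, Nat.cast_one, if_true] at h
      exact h
    · have h := sum_cubeWeight_card_filter_and_lt_le_exp μ hμ0 hμ (hK c) k
      simp only [μ, hKcard c, Nat.cast_add, if_true] at h
      exact h
  refine ⟨g, fun c => ⟨?_, ?_⟩⟩
  · have hfew := hg (.inl c)
    simp only [Sum.elim_inl, mem_filter, mem_univ, true_and, not_le] at hfew
    have hsplit := card_filter_add_card_filter_not
      (s := K c) (fun e => g (e₁ e) = true ∨ g (e₂ e) = true)
    simp only [not_or, Bool.not_eq_true, hKcard c] at hsplit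
    omega
  · simpa using hg (.inr c)

theorem AlmostFullRainbowMatchings.exists_full_of_labelling (bb : AlmostFullRainbowMatchings)
    {n : ℕ} {V E : Type} [Fintype V] [DecidableEq V] {e₁ e₂ : E → V} {col : E → Fin n}
    {part : V → Bool} (hpart : ∀ e, part (e₁ e) ≠ part (e₂ e)) (K : Fin n → Finset E)
    (hKcol : ∀ c, ∀ e ∈ K c, col e = c) (hK : ∀ c, IsMatchingE e₁ e₂ (K c)) (g : V → Bool)
    {t : ℕ} (ht : √n ≤ t)
    (hfalse : ∀ c, n ≤ #{e ∈ K c | g (e₁ e) = false ∧ g (e₂ e) = false})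
    (htrue : ∀ c, 2 * t ≤ #{e ∈ K c | g (e₁ e) = true ∧ g (e₂ e) = true}) :
    ∃ M : Finset E, IsMatchingE e₁ e₂ M ∧ IsRainbow col M ∧ ∀ c, ∃ e ∈ M, col e = c := by
  set F : Fin n → Finset E := fun c => {e ∈ K c | g (e₁ e) = false ∧ g (e₂ e) = false}
  set T : Fin n → Finset E := fun c => {e ∈ K c | g (e₁ e) = true ∧ g (e₂ e) = true}
  obtain ⟨M, hMF, hM, hMcol, hMcard⟩ := bb.exists_subset hpart F
    (fun c e he => hKcol c e (mem_filter.mp he).1)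
    fun c => ⟨(hK c).mono (filter_subset _ _), hfalse c⟩
  set R := univ \ M.image col
  have hRt : #R ≤ t := by
    have hRM : #R + #M = n := by
      rw [← card_image_of_injOn hMcol, card_sdiff_add_card_eq_card (subset_univ _), card_univ,
        Fintype.card_fin]
    have : (#R : ℝ) ≤ t := by
      have : (#R : ℝ) + #M = n := by exact_mod_cast hRM
      linarith
    exact_mod_cast this
  obtain ⟨P, hPT, hP, hPcol, hPR⟩ := exists_rainbow_matching_of_two_mul_card_le e₁ e₂ col R T
    (fun c _ => (hK c).mono (filter_subset _ _)) (fun c _ e he => hKcol c e (mem_filter.mp he).1)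
    fun c _ => by linarith [htrue c]
  have hMlabel : ∀ e ∈ M, g (e₁ e) = false ∧ g (e₂ e) = false := fun e he => by
    obtain ⟨c, -, he⟩ := mem_biUnion.mp (hMF he)
    exact (mem_filter.mp he).2
  have hPlabel : ∀ e ∈ P, g (e₁ e) = true ∧ g (e₂ e) = true := fun e he => by
    obtain ⟨c, -, he⟩ := mem_biUnion.mp (hPT he)
    exact (mem_filter.mp he).2
  refine ⟨M ∪ P, hM.union hP (disjoint_matchedVerts_of_labels Bool.false_ne_true hMlabel hPlabel),
    hMcol.union hPcol (hPR ▸ disjoint_sdiff), fun c => ?_⟩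
  by_cases hc : c ∈ M.image col
  · obtain ⟨e, he, hec⟩ := mem_image.mp hc
    exact ⟨e, mem_union_left _ he, hec⟩
  · obtain ⟨e, he, hec⟩ := mem_image.mp (hPR ▸ mem_sdiff.mpr ⟨mem_univ c, hc⟩ : c ∈ P.image col)
    exact ⟨e, mem_union_right _ he, hec⟩

lemma mul_exp_add_exp_lt_one {n x y : ℝ} (hn : 0 < n) (hx : x ≤ -Real.log n - 1)
    (hy : y ≤ -Real.log n - 1) : n * (Real.exp x + Real.exp y) < 1 := by
  have hexp : Real.exp (-Real.log n - 1) = (n * Real.exp 1)⁻¹ := by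
    rw [Real.exp_sub, Real.exp_neg, Real.exp_log hn, div_eq_mul_inv, mul_inv]
  have he : 2 < Real.exp 1 := by linarith [Real.exp_one_gt_d9]
  calc n * (Real.exp x + Real.exp y) ≤ n * (2 * (n * Real.exp 1)⁻¹) := by
        rw [← hexp]
        gcongr
        linarith [Real.exp_le_exp.mpr hx, Real.exp_le_exp.mpr hy]
    _ = 2 / Real.exp 1 := by field_simp
    _ < 1 := by rw [div_lt_one (by positivity)]; exact he

lemma tail_exponents_le {r : ℝ} (hr : 100 ≤ r) {n S t : ℕ} (hn : (n : ℝ) = r ^ 4)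
    (hS : 7 * r ^ 3 ≤ S) (hS' : (S : ℝ) ≤ 7 * r ^ 3 + 1) (ht : (t : ℝ) ≤ r ^ 2 + 1) :
    2 * (2 / r) * (n + S) - (S + 1) * Real.log 2 ≤ -Real.log n - 1 ∧
      (2 * t : ℕ) * Real.log 2 - (2 / r) ^ 2 / 2 * (n + S) ≤ -Real.log n - 1 := by
  have hr0 : 0 < r := by linarith
  have hlog : Real.log n ≤ 4 * r := by
    rw [hn, Real.log_pow]
    have := Real.log_le_sub_one_of_pos hr0
    push_cast
    linarith
  have hlog2 : 0.6931 < Real.log 2 := by linarith [Real.log_two_gt_d9]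
  have hlog2' : Real.log 2 < 0.6932 := by linarith [Real.log_two_lt_d9]
  constructor
  · have hSr : 4 * (S : ℝ) / r ≤ 28 * r ^ 2 + 1 := by
      rw [div_le_iff₀ hr0]
      nlinarith
    have hmain : 2 * (2 / r) * (n + S) = 4 * r ^ 3 + 4 * S / r := by
      rw [hn]; field_simp; ring
    have hS2 : 7 * r ^ 3 * 0.6931 ≤ (S + 1) * Real.log 2 := by
      nlinarith [pow_pos hr0 3]
    rw [hmain]
    nlinarith [mul_le_mul_of_nonneg_left hr (sq_nonneg r)]
  · have hmain : 2 * r ^ 2 ≤ (2 / r) ^ 2 / 2 * (n + S) := by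
      have h4 : (2 / r) ^ 2 / 2 * r ^ 4 = 2 * r ^ 2 := by field_simp
      rw [← h4, hn]
      gcongr
      linarith [(Nat.cast_nonneg S : (0 : ℝ) ≤ S)]
    push_cast
    nlinarith

lemma exists_fourth_root {n : ℕ} (hn : 10 ^ 8 ≤ n) :
    ∃ r : ℝ, 100 ≤ r ∧ (n : ℝ) = r ^ 4 ∧ (n : ℝ) ^ ((3 : ℝ) / 4) = r ^ 3 ∧ √(n : ℝ) = r ^ 2 := by
  have hn0 : (0 : ℝ) ≤ n := Nat.cast_nonneg n
  have hpow : ∀ k : ℕ, ((n : ℝ) ^ ((1 : ℝ) / 4)) ^ k = (n : ℝ) ^ ((k : ℝ) / 4) := fun k => by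
    rw [← Real.rpow_natCast, ← Real.rpow_mul hn0]
    ring_nf
  refine ⟨(n : ℝ) ^ ((1 : ℝ) / 4), ?_, ?_, ?_, ?_⟩
  · refine le_of_pow_le_pow_left₀ four_ne_zero (by positivity) ?_
    rw [hpow]
    norm_num
    exact_mod_cast hn
  · rw [hpow]; norm_num
  · rw [hpow]; norm_num
  · rw [hpow, Real.sqrt_eq_rpow]; norm_num

/-- Theorem 3 with constant 7, from the black box Proposition 11:
assuming every `m`-edge-coloured bipartite multigraph whose colour classes are
matchings of size at least `m` has a rainbow matching of size at least `m - √m`,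
for all sufficiently large `n`, every properly coloured bipartite multigraph with
`n` colours whose colour classes are matchings of size at least `n + 7 n^{3/4}`
has a full rainbow matching using every colour. -/
theorem stmt_7
    (bb : ∀ (m : ℕ) (V' E' : Type) [Fintype V'] [DecidableEq V'] [Fintype E'],
      ∀ (f₁ f₂ : E' → V') (col' : E' → Fin m) (part' : V' → Bool),
        (∀ e : E', part' (f₁ e) ≠ part' (f₂ e)) →
        (∀ c : Fin m, IsMatchingE f₁ f₂ (colourClass col' c) ∧
          m ≤ (colourClass col' c).card) →
        ∃ M : Finset E', IsMatchingE f₁ f₂ M ∧ IsRainbow col' M ∧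
          (m : ℝ) - Real.sqrt m ≤ M.card) :
    ∃ n₀ : ℕ, ∀ n : ℕ, n₀ ≤ n →
      ∀ (V E : Type) [Fintype V] [DecidableEq V] [Fintype E],
        ∀ (e₁ e₂ : E → V) (col : E → Fin n) (part : V → Bool),
          (∀ e : E, part (e₁ e) ≠ part (e₂ e)) →
          (∀ c : Fin n, IsMatchingE e₁ e₂ (colourClass col c) ∧
            (n : ℝ) + 7 * (n : ℝ) ^ ((3 : ℝ) / 4) ≤ (colourClass col c).card) →
          ∃ M : Finset E, IsMatchingE e₁ e₂ M ∧ IsRainbow col M ∧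
            ∀ c : Fin n, ∃ e ∈ M, col e = c := by
  refine ⟨10 ^ 8, fun n hn V E _ _ _ e₁ e₂ col part hpart hcol => ?_⟩
  obtain ⟨r, hr, hn4, hn3, hn2⟩ := exists_fourth_root hn
  set S := ⌈7 * r ^ 3⌉₊
  set t := ⌈r ^ 2⌉₊
  have hS : (S : ℝ) < 7 * r ^ 3 + 1 := Nat.ceil_lt_add_one (by positivity)
  have ht : (t : ℝ) < r ^ 2 + 1 := Nat.ceil_lt_add_one (by positivity)
  have hcard : ∀ c, n + S ≤ #(colourClass col c) := fun c => by
    have h := (hcol c).2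
    rw [hn3] at h
    have : ((n + S : ℕ) : ℝ) < #(colourClass col c) + 1 := by push_cast; linarith
    exact Nat.lt_add_one_iff.mp (by exact_mod_cast this)
  choose K hKsub hKcard using fun c => exists_subset_card_eq (hcard c)
  have hKcol : ∀ c, ∀ e ∈ K c, col e = c := fun c e he => mem_colourClass.mp (hKsub c he)
  have hK : ∀ c, IsMatchingE e₁ e₂ (K c) := fun c => (hcol c).1.mono (hKsub c)
  obtain ⟨hupper, hlower⟩ := tail_exponents_le hr hn4 (Nat.le_ceil _) hS.le ht.le
  obtain ⟨g, hg⟩ := exists_labelling_of_exp_lt K hK hKcard (q := 2 / r) (k := 2 * t)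
    (by positivity) ((div_le_one (by positivity)).mpr (by linarith))
    (by rw [Fintype.card_fin]; exact mul_exp_add_exp_lt_one (by positivity) hupper hlower)
  exact AlmostFullRainbowMatchings.exists_full_of_labelling bb hpart K hKcol hK g
    (hn2 ▸ Nat.le_ceil _) (fun c => (hg c).1) fun c => (hg c).2
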